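/- Let C be an AB3 abelian category (i.e., an abelian category with arbitrary coproducts), M a class of objects of C, and α : M → X a morphism with M ∈ add(M). If α is an add(M)-precover of X, then α is an Add(M)-precover of X. -/

import Mathlib

open CategoryTheory Limits

universe w v u

variable {C : Type u} [Category.{v} C] [Abelian C] [HasCoproducts.{w} C]

/-- `X ∈ Add(𝓜)`: `X` is a direct summand of a set-indexed coproduct of objects of `𝓜`. -/
def MemAdd (𝓜 : Set C) (X : C) : Prop :=
  ∃ (I : Type w) (U : I → C), (∀ i, U i ∈ 𝓜) ∧
    ∃ (s : X ⟶ ∐ U) (r : (∐ U) ⟶ X), s ≫ r = 𝟙 X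

/-- `X ∈ add(𝓜)`: `X` is a direct summand of a finite coproduct of objects of `𝓜`. -/
def Memadd (𝓜 : Set C) (X : C) : Prop :=
  ∃ (n : ℕ) (U : Fin n → C), (∀ i, U i ∈ 𝓜) ∧
    ∃ (s : X ⟶ ∐ U) (r : (∐ U) ⟶ X), s ≫ r = 𝟙 X

/-! Each object of `𝓜` lies in `add(𝓜)`, so maps out of it lift along `α`; lifts on the
summands of a coproduct glue to a lift on the coproduct, and lifting passes to retracts. -/

def LiftsThrough {D : Type*} [Category D] {M X : D} (α : M ⟶ X) (Y : D) : Prop :=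
  ∀ g : Y ⟶ X, ∃ h : Y ⟶ M, g = h ≫ α

namespace LiftsThrough

variable {D : Type*} [Category D] {M X : D} {α : M ⟶ X}

theorem of_retract {Y Z : D} (hZ : LiftsThrough α Z) (e : Retract Y Z) : LiftsThrough α Y := by
  intro g
  obtain ⟨h, hh⟩ := hZ (e.r ≫ g)
  refine ⟨e.i ≫ h, ?_⟩
  rw [Category.assoc, ← hh, e.retract_assoc]

theorem sigma {I : Type*} {U : I → D} [HasCoproduct U] (hU : ∀ i, LiftsThrough α (U i)) :
    LiftsThrough α (∐ U) := by
  intro g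
  choose h hh using fun i => hU i (Sigma.ι U i ≫ g)
  refine ⟨Sigma.desc h, Sigma.hom_ext _ _ fun i => ?_⟩
  simpa using hh i

end LiftsThrough

theorem memadd_of_mem {𝓜 : Set C} {Y : C} (hY : Y ∈ 𝓜) : Memadd 𝓜 Y :=
  ⟨1, fun _ => Y, fun _ => hY, Sigma.ι (fun _ : Fin 1 => Y) 0, Sigma.desc fun _ => 𝟙 Y, by simp⟩

theorem stmt6_general (𝓜 : Set C) {M X : C} (α : M ⟶ X)
    (hpre : ∀ M', Memadd 𝓜 M' → ∀ g : M' ⟶ X, ∃ h : M' ⟶ M, g = h ≫ α) :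
    ∀ M', MemAdd.{w} 𝓜 M' → ∀ g : M' ⟶ X, ∃ h : M' ⟶ M, g = h ≫ α := by
  rintro M' ⟨I, U, hU, s, r, hsr⟩
  have hsummands : ∀ i, LiftsThrough α (U i) := fun i => hpre _ (memadd_of_mem (hU i))
  exact (LiftsThrough.sigma hsummands).of_retract ⟨s, r, hsr⟩

/-- Let `C` be an AB3 abelian category, `𝓜` a class of objects, and
`α : M ⟶ X` with `M ∈ add(𝓜)`. If `α` is an `add(𝓜)`-precover of `X` then it is an
`Add(𝓜)`-precover of `X`. -/
theorem stmt6 (𝓜 : Set C) {M X : C} (hM : Memadd 𝓜 M) (α : M ⟶ X)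
    (hpre : ∀ M', Memadd 𝓜 M' → ∀ g : M' ⟶ X, ∃ h : M' ⟶ M, g = h ≫ α) :
    ∀ M', MemAdd.{w} 𝓜 M' → ∀ g : M' ⟶ X, ∃ h : M' ⟶ M, g = h ≫ α :=
  stmt6_general 𝓜 α hpre
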